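/- (Van der Corput) Let k ≥ 2 be an integer and F a real-valued smooth function on (a,b) with |F^{(k)}(x)| ≥ ε for all x in (a,b), and let ψ be a C¹ function on [a,b]. Then there is a constant c depending only on k such that for all t ≠ 0, |∫_a^b e^{-itF(x)} ψ(x) dx| ≤ c ε^{-1/k} |t|^{-1/k} ( |ψ(b)| + ∫_a^b |ψ'(x)| dx ). -/

import Mathlib

open MeasureTheory Set intervalIntegral

/-!
For a real phase `φ` with `|φ⁽ᵏ⁾| ≥ μ`, van der Corput's bound `‖∫ exp (i φ)‖ ≤ C_k μ^(-1/k)` is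
proved by induction on `k ≥ 2`. Conjugating if necessary, `φ⁽ᵏ⁾ ≥ μ`, so `φ⁽ᵏ⁻¹⁾` grows at rate
`μ` and stays below `L = μ^((k-1)/k)` in absolute value only on an interval of length at most
`2L/μ = 2μ^(-1/k)`. On the two remaining intervals `|φ⁽ᵏ⁻¹⁾| ≥ L` and the inductive hypothesis
applies; for `k = 2` it is replaced by an integration by parts against `1 / φ'`, which is
monotone there.

The amplitude `ψ` is then brought in by integrating by parts against the primitive of
`exp (-i t F)`, which the pure estimate bounds uniformly. Since `F` is only `C^k` on the open
interval, that estimate is proved on compact subintervals and passed to the limit.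
-/

section IteratedDeriv

variable {𝕜 F : Type*} [NontriviallyNormedField 𝕜] [NormedAddCommGroup F] [NormedSpace 𝕜 F]
  {f : 𝕜 → F} {s : Set 𝕜} {n m : ℕ}

theorem ContDiffOn.continuousOn_iteratedDeriv_of_isOpen (hf : ContDiffOn 𝕜 n f s)
    (hs : IsOpen s) (hm : m ≤ n) : ContinuousOn (iteratedDeriv m f) s :=
  (hf.continuousOn_iteratedDerivWithin (by exact_mod_cast hm) hs.uniqueDiffOn).congr
    (iteratedDerivWithin_of_isOpen hs).symm

theorem ContDiffOn.hasDerivAt_iteratedDeriv_of_isOpen (hf : ContDiffOn 𝕜 n f s)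
    (hs : IsOpen s) (hm : m < n) {x : 𝕜} (hx : x ∈ s) :
    HasDerivAt (iteratedDeriv m f) (iteratedDeriv (m + 1) f x) x := by
  have hd := (hf.differentiableOn_iteratedDerivWithin (by exact_mod_cast hm)
    hs.uniqueDiffOn).congr (iteratedDerivWithin_of_isOpen hs).symm
  rw [iteratedDeriv_succ]
  exact ((hd x hx).differentiableAt (hs.mem_nhds hx)).hasDerivAt

end IteratedDeriv

theorem ContDiffOn.intervalIntegrable_deriv {E : Type*} [NormedAddCommGroup E]
    [NormedSpace ℝ E] {ψ : ℝ → E} {a b : ℝ} (hψ : ContDiffOn ℝ 1 ψ (Icc a b)) (hab : a < b) :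
    IntervalIntegrable (deriv ψ) volume a b :=
  ((hψ.continuousOn_derivWithin (uniqueDiffOn_Icc hab) le_rfl).intervalIntegrable_of_Icc
    hab.le).congr_uIoo fun x hx => by
      rw [uIoo_of_le hab.le] at hx
      exact derivWithin_of_mem_nhds (Icc_mem_nhds hx.1 hx.2)

theorem IsPreconnected.forall_le_or_forall_le_neg {X : Type*} [TopologicalSpace X] {s : Set X}
    {g : X → ℝ} {μ : ℝ} (hs : IsPreconnected s) (hg : ContinuousOn g s) (hμ : 0 < μ)
    (h : ∀ x ∈ s, μ ≤ |g x|) : (∀ x ∈ s, μ ≤ g x) ∨ (∀ x ∈ s, g x ≤ -μ) := by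
  by_contra! ⟨⟨x, hx, hgx⟩, ⟨y, hy, hgy⟩⟩
  have hx' : g x ≤ -μ := by cases abs_cases (g x) <;> linarith [h x hx]
  have hy' : μ ≤ g y := by cases abs_cases (g y) <;> linarith [h y hy]
  obtain ⟨z, hz, hgz⟩ := hs.intermediate_value hx hy hg
    (show (0 : ℝ) ∈ Icc (g x) (g y) from ⟨by linarith, by linarith⟩)
  linarith [h z hz, abs_eq_zero.mpr hgz]

theorem ContinuousOn.intervalIntegrable_of_norm_le {E : Type*} [NormedAddCommGroup E]
    {f : ℝ → E} {a b M : ℝ} (hab : a ≤ b) (hf : ContinuousOn f (Ioo a b))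
    (hM : ∀ x ∈ Ioo a b, ‖f x‖ ≤ M) : IntervalIntegrable f volume a b := by
  rw [intervalIntegrable_iff_integrableOn_Ioo_of_le hab]
  exact .of_bound measure_Ioo_lt_top (hf.aestronglyMeasurable measurableSet_Ioo) M
    ((ae_restrict_iff' measurableSet_Ioo).2 (ae_of_all _ hM))

theorem exists_le_abs_off_Icc_of_mul_sub_le_sub {G : ℝ → ℝ} {u v c L : ℝ} (huv : u ≤ v)
    (hc : 0 < c) (hL : 0 ≤ L) (hG : ContinuousOn G (Icc u v))
    (hGc : ∀ x ∈ Icc u v, ∀ y ∈ Icc u v, x ≤ y → c * (y - x) ≤ G y - G x) :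
    ∃ p ∈ Icc u v, ∃ q ∈ Icc u v, p ≤ q ∧ q - p ≤ 2 * L / c ∧
      (∀ x ∈ Ioo u p, L ≤ |G x|) ∧ ∀ x ∈ Ioo q v, L ≤ |G x| := by
  have hGuv : G u ≤ G v := by
    nlinarith [hGc u (left_mem_Icc.2 huv) v (right_mem_Icc.2 huv) huv]
  -- `p` and `q` are where `G` crosses `-L` and `L`, clamped to `[u, v]`
  obtain ⟨p, hp, hGp⟩ := intermediate_value_Icc huv hG
    (show max (G u) (min (-L) (G v)) ∈ Icc (G u) (G v) from
      ⟨le_max_left _ _, max_le hGuv (min_le_right _ _)⟩)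
  obtain ⟨q, hq, hGq⟩ := intermediate_value_Icc huv hG
    (show max (G u) (min L (G v)) ∈ Icc (G u) (G v) from
      ⟨le_max_left _ _, max_le hGuv (min_le_right _ _)⟩)
  have hGqp : G q - G p ≤ 2 * L := by
    rw [hGp, hGq]; simp only [max_def, min_def]; split_ifs <;> linarith
  have hpq : p ≤ q := by
    by_contra! hqp
    have := hGc q hq p hp hqp.le
    have : G p ≤ G q := by rw [hGp, hGq]; gcongr; linarith
    nlinarith
  have hlen : q - p ≤ 2 * L / c := by
    rw [le_div_iff₀ hc]; nlinarith [hGc p hp q hq hpq]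
  refine ⟨p, hp, q, hq, hpq, hlen, fun x hx => ?_, fun x hx => ?_⟩
  · have h1 := hGc u (left_mem_Icc.2 huv) x ⟨hx.1.le, hx.2.le.trans hp.2⟩ hx.1.le
    have h2 := hGc x ⟨hx.1.le, hx.2.le.trans hp.2⟩ p hp hx.2.le
    have hux : G u < G x := by nlinarith [hx.1]
    have hxp : G x < G p := by nlinarith [hx.2]
    rw [hGp, lt_max_iff, lt_min_iff] at hxp
    rcases hxp with hxu | ⟨hxL, -⟩
    · linarith
    · rw [abs_of_neg (by linarith)]; linarith
  · have h1 := hGc q hq x ⟨hq.1.trans hx.1.le, hx.2.le⟩ hx.1.le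
    have h2 := hGc x ⟨hq.1.trans hx.1.le, hx.2.le⟩ v (right_mem_Icc.2 huv) hx.2.le
    have hqx : G q < G x := by nlinarith [hx.1]
    have hxv : G x < G v := by nlinarith [hx.2]
    rw [hGq, max_lt_iff, min_lt_iff] at hqx
    rcases hqx.2 with hLx | hvx
    · rw [abs_of_pos (by linarith)]; exact hLx.le
    · linarith

section Integral

variable {E : Type*} [NormedAddCommGroup E] [NormedSpace ℝ E] {f : ℝ → E}

theorem norm_integral_le_of_forall_Icc_subset_Ioo {a b M : ℝ} (hab : a ≤ b) (hM : 0 ≤ M)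
    (hf : IntervalIntegrable f volume a b)
    (h : ∀ u v, a < u → u ≤ v → v < b → ‖∫ x in u..v, f x‖ ≤ M) :
    ‖∫ x in a..b, f x‖ ≤ M := by
  rcases hab.eq_or_lt with rfl | hab
  · simpa using hM
  have hleft : ∀ v ∈ Ioo a b, ‖∫ x in a..v, f x‖ ≤ M := by
    intro v hv
    have hcont : ContinuousOn (fun u => ‖∫ x in v..u, f x‖) (Icc a v) := by
      have hfv := hf.mono_set (uIcc_subset_uIcc_left (Icc_subset_uIcc (Ioo_subset_Icc_self hv)))
      simpa [uIcc_of_le hv.1.le] using (continuousOn_primitive_interval' hfv right_mem_uIcc).norm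
    rw [integral_symm, norm_neg]
    refine le_on_closure (fun u (hu : u ∈ Ioo a v) => ?_) (by rwa [closure_Ioo hv.1.ne])
      continuousOn_const (by rw [closure_Ioo hv.1.ne]; exact left_mem_Icc.2 hv.1.le)
    rw [integral_symm, norm_neg]
    exact h u v hu.1 hu.2.le hv.2
  have hcont : ContinuousOn (fun v => ‖∫ x in a..v, f x‖) (Icc a b) := by
    simpa [uIcc_of_le hab.le] using (continuousOn_primitive_interval' hf left_mem_uIcc).norm
  exact le_on_closure hleft (by rwa [closure_Ioo hab.ne]) continuousOn_const
    (by rw [closure_Ioo hab.ne]; exact right_mem_Icc.2 hab.le)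

theorem norm_integral_le_of_mul_sub_le_sub {G : ℝ → ℝ} {u v c L B : ℝ} (huv : u ≤ v)
    (hc : 0 < c) (hL : 0 ≤ L) (hf : IntervalIntegrable f volume u v)
    (hf1 : ∀ x ∈ Icc u v, ‖f x‖ ≤ 1) (hG : ContinuousOn G (Icc u v))
    (hGc : ∀ x ∈ Icc u v, ∀ y ∈ Icc u v, x ≤ y → c * (y - x) ≤ G y - G x)
    (hB : ∀ p q, u ≤ p → p ≤ q → q ≤ v → (∀ x ∈ Ioo p q, L ≤ |G x|) →
      ‖∫ x in p..q, f x‖ ≤ B) :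
    ‖∫ x in u..v, f x‖ ≤ 2 * B + 2 * L / c := by
  obtain ⟨p, hp, q, hq, hpq, hlen, hleft, hright⟩ :=
    exists_le_abs_off_Icc_of_mul_sub_le_sub huv hc hL hG hGc
  have hmid : ‖∫ x in p..q, f x‖ ≤ 2 * L / c := by
    have := norm_integral_le_of_norm_le_const (a := p) (b := q) (C := 1) fun x hx =>
      hf1 x ⟨hp.1.trans (uIoc_of_le hpq ▸ hx).1.le, (uIoc_of_le hpq ▸ hx).2.trans hq.2⟩
    rw [one_mul, abs_of_nonneg (sub_nonneg.2 hpq)] at this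
    exact this.trans hlen
  have hint : ∀ {x y}, x ∈ Icc u v → y ∈ Icc u v → IntervalIntegrable f volume x y :=
    fun hx hy => hf.mono_set (uIcc_subset_uIcc (Icc_subset_uIcc hx) (Icc_subset_uIcc hy))
  rw [← integral_add_adjacent_intervals (hint (left_mem_Icc.2 huv) hq)
      (hint hq (right_mem_Icc.2 huv)),
    ← integral_add_adjacent_intervals (hint (left_mem_Icc.2 huv) hp) (hint hp hq)]
  calc _ ≤ ‖∫ x in u..p, f x‖ + ‖∫ x in p..q, f x‖ + ‖∫ x in q..v, f x‖ := norm_add₃_le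
    _ ≤ B + 2 * L / c + B := by
      gcongr
      · exact hB u p le_rfl hp.1 hp.2 hleft
      · exact hB q v hq.1 hq.2 le_rfl hright
    _ = 2 * B + 2 * L / c := by ring

end Integral

theorem norm_integral_mul_le_of_norm_primitive_le {𝕜 : Type*} [RCLike 𝕜] {f ψ ψ' : ℝ → 𝕜}
    {a b M : ℝ} (hab : a ≤ b) (hf : IntervalIntegrable f volume a b)
    (hfc : ContinuousOn f (Ioo a b)) (hψ : ContinuousOn ψ (Icc a b))
    (hψψ' : ∀ x ∈ Ioo a b, HasDerivAt ψ (ψ' x) x) (hψ' : IntervalIntegrable ψ' volume a b)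
    (hM : ∀ x ∈ Icc a b, ‖∫ y in a..x, f y‖ ≤ M) :
    ‖∫ x in a..b, f x * ψ x‖ ≤ M * (‖ψ b‖ + ∫ x in a..b, ‖ψ' x‖) := by
  set Φ : ℝ → 𝕜 := fun x => ∫ y in a..x, f y
  have hΦ : ContinuousOn Φ (Icc a b) := by
    simpa [uIcc_of_le hab] using continuousOn_primitive_interval' hf left_mem_uIcc
  have hΦf : ∀ x ∈ Ioo a b, HasDerivAt Φ (f x) x := fun x hx =>
    integral_hasDerivAt_right (hf.mono_set (by simp [uIcc_of_le hab, uIcc_of_le hx.1.le,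
        Icc_subset_Icc_right hx.2.le]))
      (hfc.stronglyMeasurableAtFilter isOpen_Ioo x hx) (hfc.continuousAt (isOpen_Ioo.mem_nhds hx))
  have hparts : ∫ x in a..b, f x * ψ x = ψ b * Φ b - ∫ x in a..b, ψ' x * Φ x := by
    have := integral_mul_deriv_eq_deriv_mul_of_hasDerivAt (u := ψ) (v := Φ)
      (by rwa [uIcc_of_le hab]) (by rwa [uIcc_of_le hab])
      (by simpa [hab] using hψψ') (by simpa [hab] using hΦf) hψ' hf
    simpa [Φ, mul_comm] using this
  have hψ'Φ : ∀ x ∈ Icc a b, ‖ψ' x * Φ x‖ ≤ ‖ψ' x‖ * M := fun x hx => by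
    rw [norm_mul]; exact mul_le_mul_of_nonneg_left (hM x hx) (norm_nonneg _)
  rw [hparts]
  calc ‖ψ b * Φ b - ∫ x in a..b, ψ' x * Φ x‖
      ≤ ‖ψ b‖ * M + ∫ x in a..b, ‖ψ' x‖ * M := by
        refine norm_sub_le_of_le ?_ (norm_integral_le_of_norm_le hab
          (ae_of_all _ fun x hx => hψ'Φ x (Ioc_subset_Icc_self hx)) (hψ'.norm.mul_const M))
        rw [norm_mul]
        exact mul_le_mul_of_nonneg_left (hM b (right_mem_Icc.2 hab)) (norm_nonneg _)
    _ = M * (‖ψ b‖ + ∫ x in a..b, ‖ψ' x‖) := by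
        rw [intervalIntegral.integral_mul_const]; ring

section Oscillatory

open Complex ComplexConjugate

variable {s : Set ℝ} {φ : ℝ → ℝ} {a b u v μ : ℝ}

theorem continuousOn_exp_mul_I (hφ : ContinuousOn φ s) :
    ContinuousOn (fun x => exp (φ x * I)) s :=
  continuous_exp.comp_continuousOn
    ((continuous_ofReal.comp_continuousOn hφ).mul continuousOn_const)

theorem intervalIntegrable_exp_mul_I (hφ : ContinuousOn φ (Ioo a b)) (hab : a ≤ b) :
    IntervalIntegrable (fun x => exp (φ x * I)) volume a b :=
  (continuousOn_exp_mul_I hφ).intervalIntegrable_of_norm_le hab fun _ _ =>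
    (norm_exp_ofReal_mul_I _).le

theorem norm_integral_exp_neg_mul_I (φ : ℝ → ℝ) (u v : ℝ) :
    ‖∫ x in u..v, exp ((-φ x : ℝ) * I)‖ = ‖∫ x in u..v, exp ((φ x : ℝ) * I)‖ := by
  have hconj : ∀ x, exp ((-φ x : ℝ) * I) = conj (exp ((φ x : ℝ) * I)) := fun x => by
    rw [← exp_conj]; simp
  simp_rw [hconj, intervalIntegral_conj, RCLike.norm_conj]

theorem norm_integral_exp_mul_I_le_of_hasDerivAt {φ' φ'' : ℝ → ℝ} (huv : u ≤ v)
    (hφ : ∀ x ∈ Icc u v, HasDerivAt φ (φ' x) x)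
    (hφ' : ∀ x ∈ Icc u v, HasDerivAt φ' (φ'' x) x) (hφ''c : ContinuousOn φ'' (Icc u v))
    (hφ'0 : ∀ x ∈ Icc u v, φ' x ≠ 0) :
    ‖∫ x in u..v, exp (φ x * I)‖ ≤
      |φ' u|⁻¹ + |φ' v|⁻¹ + ∫ x in u..v, |φ'' x| / φ' x ^ 2 := by
  set e : ℝ → ℂ := fun x => exp (φ x * I)
  -- `e = e' * w` with `w = (i φ')⁻¹`, then integrate by parts
  set w : ℝ → ℂ := fun x => -I * ((φ' x)⁻¹ : ℝ)
  set w' : ℝ → ℂ := fun x => -I * ((-φ'' x / φ' x ^ 2 : ℝ) : ℂ)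
  have he : ∀ x ∈ Icc u v, HasDerivAt e (e x * (φ' x * I)) x := fun x hx =>
    ((hφ x hx).ofReal_comp.mul_const I).cexp
  have hw : ∀ x ∈ Icc u v, HasDerivAt w (w' x) x := fun x hx =>
    (((hφ' x hx).inv (hφ'0 x hx)).ofReal_comp).const_mul (-I)
  have hφ'c : ContinuousOn φ' (Icc u v) := fun x hx =>
    (hφ' x hx).continuousAt.continuousWithinAt
  have hec : ContinuousOn e (Icc u v) := fun x hx => (he x hx).continuousAt.continuousWithinAt
  have hw'c : ContinuousOn w' (Icc u v) :=
    continuousOn_const.mul (continuous_ofReal.comp_continuousOn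
      (hφ''c.neg.div (hφ'c.pow 2) fun x hx => pow_ne_zero 2 (hφ'0 x hx)))
  have hparts := integral_mul_deriv_eq_deriv_mul (u := w) (v := e)
    (fun x hx => hw x (uIcc_of_le huv ▸ hx)) (fun x hx => he x (uIcc_of_le huv ▸ hx))
    (hw'c.intervalIntegrable_of_Icc huv)
    ((hec.mul ((continuous_ofReal.comp_continuousOn hφ'c).mul
      continuousOn_const)).intervalIntegrable_of_Icc huv)
  have hwe : ∀ x ∈ Icc u v, w x * (e x * (φ' x * I)) = e x := fun x hx => by
    have : (φ' x : ℂ) ≠ 0 := ofReal_ne_zero.2 (hφ'0 x hx)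
    simp only [w]; push_cast; field_simp; rw [I_sq]; ring
  rw [integral_congr fun x hx => (hwe x (uIcc_of_le huv ▸ hx)).symm, hparts]
  have hnorm_we : ∀ x, ‖w x * e x‖ = |φ' x|⁻¹ := fun x => by
    simp [w, e, norm_exp_ofReal_mul_I]
  have hnorm_w'e : ∀ x, ‖w' x * e x‖ = |φ'' x| / φ' x ^ 2 := fun x => by
    simp [w', e, norm_exp_ofReal_mul_I]
  calc _ ≤ ‖w v * e v‖ + ‖w u * e u‖ + ‖∫ x in u..v, w' x * e x‖ :=
      (norm_sub_le _ _).trans (add_le_add_left (norm_sub_le _ _) _)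
    _ ≤ |φ' v|⁻¹ + |φ' u|⁻¹ + ∫ x in u..v, |φ'' x| / φ' x ^ 2 := by
      rw [hnorm_we, hnorm_we, ← integral_congr fun x _ => hnorm_w'e x]
      gcongr
      exact norm_integral_le_integral_norm huv
    _ = _ := by ring

theorem integral_abs_div_sq_eq_inv_sub_inv {φ' φ'' : ℝ → ℝ} (huv : u ≤ v)
    (hφ' : ∀ x ∈ Icc u v, HasDerivAt φ' (φ'' x) x) (hφ''c : ContinuousOn φ'' (Icc u v))
    (hφ'' : ∀ x ∈ Icc u v, 0 ≤ φ'' x) (hφ'0 : ∀ x ∈ Icc u v, φ' x ≠ 0) :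
    ∫ x in u..v, |φ'' x| / φ' x ^ 2 = (φ' u)⁻¹ - (φ' v)⁻¹ := by
  have hφ'c : ContinuousOn φ' (Icc u v) := fun x hx =>
    (hφ' x hx).continuousAt.continuousWithinAt
  have hftc := integral_eq_sub_of_hasDerivAt
    (fun x hx => (hφ' x (uIcc_of_le huv ▸ hx)).inv (hφ'0 x (uIcc_of_le huv ▸ hx)))
    ((hφ''c.neg.div (hφ'c.pow 2) fun x hx => pow_ne_zero 2 (hφ'0 x hx)).intervalIntegrable_of_Icc
      huv)
  rw [integral_congr (g := fun x => -(-φ'' x / φ' x ^ 2)) fun x hx => by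
    simp [abs_of_nonneg (hφ'' x (uIcc_of_le huv ▸ hx)), neg_div],
    intervalIntegral.integral_neg, hftc, Pi.inv_apply, Pi.inv_apply]
  ring

theorem norm_integral_exp_mul_I_le_of_iteratedDeriv_two_nonneg (hs : IsOpen s)
    (hφ : ContDiffOn ℝ 2 φ s) (hsub : Icc u v ⊆ s) (huv : u ≤ v) (hμ : 0 < μ)
    (hφ' : ∀ x ∈ Ioo u v, μ ≤ |deriv φ x|) (hφ'' : ∀ x ∈ Ioo u v, 0 ≤ iteratedDeriv 2 φ x) :
    ‖∫ x in u..v, exp (φ x * I)‖ ≤ 4 / μ := by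
  rcases huv.eq_or_lt with rfl | huv
  · rw [integral_same, norm_zero]; positivity
  have hD : ∀ x ∈ Icc u v, HasDerivAt φ (deriv φ x) x := fun x hx => by
    simpa using hφ.hasDerivAt_iteratedDeriv_of_isOpen hs (m := 0) (by norm_num) (hsub hx)
  have hD2 : ∀ x ∈ Icc u v, HasDerivAt (deriv φ) (iteratedDeriv 2 φ x) x := fun x hx => by
    simpa using hφ.hasDerivAt_iteratedDeriv_of_isOpen hs (m := 1) (by norm_num) (hsub hx)
  have hD2c : ContinuousOn (iteratedDeriv 2 φ) (Icc u v) :=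
    (hφ.continuousOn_iteratedDeriv_of_isOpen hs le_rfl).mono hsub
  have hDc : ContinuousOn (deriv φ) (Icc u v) :=
    fun x hx => (hD2 x hx).continuousAt.continuousWithinAt
  have hμD : ∀ x ∈ Icc u v, μ ≤ |deriv φ x| := fun x hx =>
    le_on_closure hφ' continuousOn_const (by rw [closure_Ioo huv.ne]; exact hDc.abs)
      (by rwa [closure_Ioo huv.ne])
  have hD2nonneg : ∀ x ∈ Icc u v, 0 ≤ iteratedDeriv 2 φ x := fun x hx =>
    le_on_closure hφ'' continuousOn_const (by rwa [closure_Ioo huv.ne])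
      (by rwa [closure_Ioo huv.ne])
  have hD0 : ∀ x ∈ Icc u v, deriv φ x ≠ 0 := fun x hx => by
    have := hμD x hx; contrapose! this; simpa [this]
  calc _ ≤ |deriv φ u|⁻¹ + |deriv φ v|⁻¹ +
          ∫ x in u..v, |iteratedDeriv 2 φ x| / deriv φ x ^ 2 :=
        norm_integral_exp_mul_I_le_of_hasDerivAt huv.le hD hD2 hD2c hD0
    _ ≤ 2 * (|deriv φ u|⁻¹ + |deriv φ v|⁻¹) := by
        rw [integral_abs_div_sq_eq_inv_sub_inv huv.le hD2 hD2c hD2nonneg hD0, ← abs_inv,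
          ← abs_inv]
        linarith [le_abs_self (deriv φ u)⁻¹, neg_abs_le (deriv φ v)⁻¹]
    _ ≤ 2 * (μ⁻¹ + μ⁻¹) := by
        gcongr
        exacts [hμD u (left_mem_Icc.2 huv.le), hμD v (right_mem_Icc.2 huv.le)]
    _ = 4 / μ := by ring

theorem norm_integral_exp_mul_I_le_of_iteratedDeriv_succ_ge {k : ℕ} {L B : ℝ} (hs : IsOpen s)
    (hφ : ContDiffOn ℝ (k + 1 : ℕ) φ s) (hsub : Icc u v ⊆ s) (huv : u ≤ v) (hμ : 0 < μ)
    (hL : 0 ≤ L) (hφk : ∀ x ∈ Ioo u v, μ ≤ iteratedDeriv (k + 1) φ x)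
    (hB : ∀ p q, u ≤ p → p ≤ q → q ≤ v → (∀ x ∈ Ioo p q, L ≤ |iteratedDeriv k φ x|) →
      ‖∫ x in p..q, exp (φ x * I)‖ ≤ B) :
    ‖∫ x in u..v, exp (φ x * I)‖ ≤ 2 * B + 2 * L / μ := by
  have hG : ContinuousOn (iteratedDeriv k φ) (Icc u v) :=
    (hφ.continuousOn_iteratedDeriv_of_isOpen hs (Nat.le_succ k)).mono hsub
  have hG' : ∀ x ∈ Ioo u v, HasDerivAt (iteratedDeriv k φ) (iteratedDeriv (k + 1) φ x) x :=
    fun x hx => hφ.hasDerivAt_iteratedDeriv_of_isOpen hs (Nat.lt_succ_self k)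
      (hsub (Ioo_subset_Icc_self hx))
  refine norm_integral_le_of_mul_sub_le_sub huv hμ hL
    ((continuousOn_exp_mul_I (hφ.continuousOn.mono hsub)).intervalIntegrable_of_Icc huv)
    (fun _ _ => (norm_exp_ofReal_mul_I _).le) hG ?_ hB
  refine (convex_Icc u v).mul_sub_le_image_sub_of_le_deriv hG ?_ ?_ <;> rw [interior_Icc]
  · exact fun x hx => (hG' x hx).differentiableAt.differentiableWithinAt
  · exact fun x hx => (hG' x hx).deriv ▸ hφk x hx

def VanDerCorputBound (k : ℕ) (C : ℝ) : Prop :=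
  ∀ ⦃s : Set ℝ⦄ ⦃φ : ℝ → ℝ⦄ ⦃u v μ : ℝ⦄, IsOpen s → ContDiffOn ℝ k φ s → Icc u v ⊆ s →
    u ≤ v → 0 < μ → (∀ x ∈ Ioo u v, μ ≤ |iteratedDeriv k φ x|) →
    ‖∫ x in u..v, exp (φ x * I)‖ ≤ C * μ ^ (-(1 : ℝ) / k)

namespace VanDerCorputBound

variable {k : ℕ} {C : ℝ}

theorem of_forall_le (h : ∀ ⦃s : Set ℝ⦄ ⦃φ : ℝ → ℝ⦄ ⦃u v μ : ℝ⦄, IsOpen s →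
    ContDiffOn ℝ k φ s → Icc u v ⊆ s → u ≤ v → 0 < μ →
    (∀ x ∈ Ioo u v, μ ≤ iteratedDeriv k φ x) →
    ‖∫ x in u..v, exp (φ x * I)‖ ≤ C * μ ^ (-(1 : ℝ) / k)) :
    VanDerCorputBound k C := by
  intro s φ u v μ hs hφ hsub huv hμ hφk
  have hcont : ContinuousOn (iteratedDeriv k φ) (Ioo u v) :=
    (hφ.continuousOn_iteratedDeriv_of_isOpen hs le_rfl).mono (Ioo_subset_Icc_self.trans hsub)
  rcases isPreconnected_Ioo.forall_le_or_forall_le_neg hcont hμ hφk with hpos | hneg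
  · exact h hs hφ hsub huv hμ hpos
  · rw [← norm_integral_exp_neg_mul_I]
    refine h hs hφ.neg hsub huv hμ fun x hx => ?_
    rw [iteratedDeriv_fun_neg]
    linarith [hneg x hx]

theorem two : VanDerCorputBound 2 10 := by
  refine of_forall_le fun s φ u v μ hs hφ hsub huv hμ hφ2 => ?_
  have hL : 0 < √μ := Real.sqrt_pos.2 hμ
  calc _ ≤ 2 * (4 / √μ) + 2 * √μ / μ :=
        norm_integral_exp_mul_I_le_of_iteratedDeriv_succ_ge (k := 1) hs hφ hsub huv hμ hL.le hφ2
          fun p q hup hpq hqv hpiece =>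
            norm_integral_exp_mul_I_le_of_iteratedDeriv_two_nonneg hs hφ
              ((Icc_subset_Icc hup hqv).trans hsub) hpq hL (by simpa using hpiece)
              fun x hx => hμ.le.trans (hφ2 x (Ioo_subset_Ioo hup hqv hx))
    _ = 10 * μ ^ (-(1 : ℝ) / (2 : ℕ)) := by
        rw [show -(1 : ℝ) / (2 : ℕ) = -(1 / 2) by norm_num, Real.rpow_neg hμ.le,
          ← Real.sqrt_eq_rpow]
        set r := √μ
        rw [show μ = r ^ 2 from (Real.sq_sqrt hμ.le).symm]
        field_simp
        ring

theorem succ (hk : k ≠ 0) (h : VanDerCorputBound k C) :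
    VanDerCorputBound (k + 1) (2 * C + 2) := by
  refine of_forall_le fun s φ u v μ hs hφ hsub huv hμ hφk => ?_
  set L := μ ^ ((k : ℝ) / (k + 1))
  have hL : 0 < L := by positivity
  have hk' : (k : ℝ) ≠ 0 := by exact_mod_cast hk
  have hLpow : L ^ (-(1 : ℝ) / k) = μ ^ (-(1 : ℝ) / (k + 1)) := by
    rw [← Real.rpow_mul hμ.le]; congr 1; field_simp
  have hLdiv : L / μ = μ ^ (-(1 : ℝ) / (k + 1)) := by
    rw [← Real.rpow_sub_one hμ.ne']; congr 1; field_simp; ring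
  calc _ ≤ 2 * (C * L ^ (-(1 : ℝ) / k)) + 2 * L / μ :=
        norm_integral_exp_mul_I_le_of_iteratedDeriv_succ_ge hs hφ hsub huv hμ hL.le hφk
          fun p q hup hpq hqv hpiece =>
            h hs (hφ.of_le (by exact_mod_cast k.le_succ)) ((Icc_subset_Icc hup hqv).trans hsub)
              hpq hL hpiece
    _ = (2 * C + 2) * μ ^ (-(1 : ℝ) / (k + 1 : ℕ)) := by
        rw [mul_div_assoc, hLpow, hLdiv]
        push_cast
        ring

theorem norm_integral_le_of_Ioo (h : VanDerCorputBound k C) (hC : 0 ≤ C) (hμ : 0 < μ)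
    (hφ : ContDiffOn ℝ k φ (Ioo a b)) (hφk : ∀ x ∈ Ioo a b, μ ≤ |iteratedDeriv k φ x|)
    (hab : a ≤ b) : ‖∫ x in a..b, exp (φ x * I)‖ ≤ C * μ ^ (-(1 : ℝ) / k) :=
  norm_integral_le_of_forall_Icc_subset_Ioo hab (by positivity)
    (intervalIntegrable_exp_mul_I hφ.continuousOn hab) fun u v hu huv hv =>
      h isOpen_Ioo hφ (Icc_subset_Ioo hu hv) huv hμ fun x hx =>
        hφk x ⟨hu.trans hx.1, hx.2.trans hv⟩

end VanDerCorputBound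

end Oscillatory

theorem exists_vanDerCorputBound {k : ℕ} (hk : 2 ≤ k) : ∃ C > 0, VanDerCorputBound k C := by
  induction k, hk using Nat.le_induction with
  | base => exact ⟨10, by norm_num, .two⟩
  | succ k hk ih =>
    obtain ⟨C, hC, h⟩ := ih
    exact ⟨2 * C + 2, by positivity, h.succ (by omega)⟩

theorem stmt_1 (k : ℕ) (hk : 2 ≤ k) :
    ∃ c > 0, ∀ (a b ε t : ℝ) (F : ℝ → ℝ) (ψ : ℝ → ℂ),
      a < b → 0 < ε → t ≠ 0 →
      ContDiffOn ℝ k F (Ioo a b) →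
      (∀ x ∈ Ioo a b, ε ≤ |iteratedDeriv k F x|) →
      ContDiffOn ℝ 1 ψ (Icc a b) →
      ‖∫ x in a..b, Complex.exp (-Complex.I * t * F x) * ψ x‖ ≤
        c * ε ^ (-(1 : ℝ) / k) * |t| ^ (-(1 : ℝ) / k) *
          (‖ψ b‖ + ∫ x in a..b, ‖deriv ψ x‖) := by
  obtain ⟨C, hC, hvdc⟩ := exists_vanDerCorputBound hk
  refine ⟨C, hC, fun a b ε t F ψ hab hε ht hF hFk hψ => ?_⟩
  set φ : ℝ → ℝ := fun x => -t * F x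
  have hφ : ContDiffOn ℝ k φ (Ioo a b) := contDiffOn_const.mul hF
  have hφk : ∀ x ∈ Ioo a b, ε * |t| ≤ |iteratedDeriv k φ x| := fun x hx => by
    rw [iteratedDeriv_const_mul_field, abs_mul, abs_neg, mul_comm]
    exact mul_le_mul_of_nonneg_left (hFk x hx) (abs_nonneg t)
  have hprim : ∀ x ∈ Icc a b, ‖∫ y in a..x, Complex.exp (φ y * Complex.I)‖ ≤
      C * (ε * |t|) ^ (-(1 : ℝ) / k) := fun x hx =>
    hvdc.norm_integral_le_of_Ioo hC.le (by positivity) (hφ.mono (Ioo_subset_Ioo_right hx.2))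
      (fun y hy => hφk y ⟨hy.1, hy.2.trans_le hx.2⟩) hx.1
  have hψ' : ∀ x ∈ Ioo a b, HasDerivAt ψ (deriv ψ x) x := fun x hx =>
    ((hψ.differentiableOn one_ne_zero x (Ioo_subset_Icc_self hx)).differentiableAt
      (Icc_mem_nhds hx.1 hx.2)).hasDerivAt
  have hphase : ∀ x, Complex.exp (-Complex.I * t * F x) = Complex.exp (φ x * Complex.I) :=
    fun x => by push_cast [φ]; ring_nf
  simp only [hphase]
  calc _ ≤ C * (ε * |t|) ^ (-(1 : ℝ) / k) * (‖ψ b‖ + ∫ x in a..b, ‖deriv ψ x‖) :=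
        norm_integral_mul_le_of_norm_primitive_le hab.le
          (intervalIntegrable_exp_mul_I hφ.continuousOn hab.le)
          (continuousOn_exp_mul_I hφ.continuousOn) hψ.continuousOn hψ'
          (hψ.intervalIntegrable_deriv hab) hprim
    _ = _ := by rw [Real.mul_rpow hε.le (abs_nonneg t)]; ring
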